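/- arXiv:1504.01357 — 2 statements merged into one kernel-verified Lean document; each statement's English description precedes it below -/
import Mathlib

section
/- Let X be a complex Banach space, f : ℕ₀ → X a finitely supported sequence and α > 0. Then W^α(W^{-α} f) = f and W^{-α}(W^α f) = f. -/
/-- The Cesàro kernel `k^α(n) = Γ(n+α)/(Γ(α)·Γ(n+1))`. -/
noncomputable def cesK (α : ℝ) (n : ℕ) : ℝ :=
  Real.Gamma ((n : ℝ) + α) / (Real.Gamma α * Real.Gamma ((n : ℝ) + 1))

/-- The Weyl sum of order `α`: `W^{-α}f(n) = ∑_{j=n}^∞ k^α(j-n)·f(j)`. -/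
noncomputable def weylSum {X : Type*} [AddCommMonoid X] [Module ℝ X] (α : ℝ) (f : ℕ → X) :
    ℕ → X :=
  fun n => ∑ᶠ j : ℕ, cesK α j • f (j + n)

/-- The forward difference operator `Δh(n) = h(n+1) - h(n)`. -/
def fdiff {X : Type*} [AddCommGroup X] (f : ℕ → X) : ℕ → X := fun n => f (n + 1) - f n

/-- The Weyl difference of order `α > 0`:
`W^α f(n) = (-1)^m Δ^m W^{-(m-α)} f(n)` with `m = [α]+1`; and `W^0 f = f`. -/
noncomputable def weylDiff {X : Type*} [AddCommGroup X] [Module ℝ X] (α : ℝ) (f : ℕ → X) :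
    ℕ → X :=
  if α = 0 then f
  else ((-1 : ℝ) ^ (⌊α⌋₊ + 1)) • fdiff^[⌊α⌋₊ + 1] (weylSum ((⌊α⌋₊ : ℝ) + 1 - α) f)

/-! For positive orders the Cesàro kernel is `k^β(j) = Ring.multichoose β j`. Chu–Vandermonde for
`multichoose` makes the Weyl sums a semigroup, `W^{-β} W^{-γ} = W^{-(β+γ)}`, and Pascal's rule gives
`Δ W^{-(β+1)} = -W^{-β}`. With `m = [α] + 1` both compositions therefore collapse to
`(-1)^m Δ^m W^{-m} f = f`; for `W^{-α} W^α f` one first commutes `W^{-α}` past `Δ^m`. -/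

open Finset

theorem Ring.multichoose_add {R : Type*} [CommRing R] [BinomialRing R] (r s : R) (k : ℕ) :
    multichoose (r + s) k = ∑ ij ∈ antidiagonal k, multichoose r ij.1 * multichoose s ij.2 := by
  have h (t : R) (n : ℕ) : multichoose t n = (n : ℤ).negOnePow • choose (-t) n := by
    rw [choose_neg', smul_smul, ← Int.negOnePow_add, Int.negOnePow_even _ ⟨n, rfl⟩, one_smul]
  rw [h, neg_add, add_choose_eq _ (Commute.all _ _), smul_sum]
  refine sum_congr rfl fun ij hij => ?_
  rw [h, h, ← mem_antidiagonal.mp hij, Nat.cast_add, Int.negOnePow_add, smul_mul_smul_comm]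

theorem Ring.multichoose_add_eq_sum_range {R : Type*} [CommRing R] [BinomialRing R] (r s : R)
    (k : ℕ) :
    multichoose (r + s) k = ∑ i ∈ range (k + 1), multichoose r i * multichoose s (k - i) := by
  rw [multichoose_add,
    Nat.sum_antidiagonal_eq_sum_range_succ fun i j => multichoose r i * multichoose s j]

theorem Real.Gamma_nat_add_eq_mul_ascPochhammer {α : ℝ} (hα : 0 < α) (n : ℕ) :
    Real.Gamma (n + α) = Real.Gamma α * (ascPochhammer ℝ n).eval α := by
  induction n with
  | zero => simp
  | succ n ih =>
    rw [Nat.cast_succ, add_right_comm, Real.Gamma_add_one (by positivity), ih,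
      ascPochhammer_succ_eval]
    ring

theorem cesK_eq_multichoose {α : ℝ} (hα : 0 < α) (n : ℕ) : cesK α n = Ring.multichoose α n := by
  have h := Ring.factorial_nsmul_multichoose_eq_ascPochhammer α n
  rw [Polynomial.ascPochhammer_smeval_eq_eval, nsmul_eq_mul] at h
  rw [cesK, Real.Gamma_nat_add_eq_mul_ascPochhammer hα, Real.Gamma_nat_eq_factorial, ← h,
    mul_div_mul_left _ _ (Real.Gamma_pos_of_pos hα).ne', mul_div_cancel_left₀]
  positivity

theorem fdiff_apply_eq_zero {X : Type*} [AddCommGroup X] {f : ℕ → X} {N : ℕ}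
    (hf : ∀ j ≥ N, f j = 0) : ∀ n ≥ N, fdiff f n = 0 := fun n hn => by
  rw [fdiff, hf n hn, hf (n + 1) (by omega), sub_zero]

theorem fdiff_smul {M X : Type*} [Monoid M] [AddCommGroup X] [DistribMulAction M X] (c : M)
    (f : ℕ → X) : fdiff (c • f) = c • fdiff f := by
  funext n
  simp only [fdiff, Pi.smul_apply, smul_sub]

section multichooseSum

variable {X : Type*} [AddCommGroup X] [Module ℝ X]

/-- `Ring.multichoose β j` is `k^β(j)` for `β > 0` and the Kronecker delta at `j = 0` for `β = 0`,
so this is `W^{-β}` extended to all real orders, with order `0` the identity. -/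
noncomputable def multichooseSum (β : ℝ) (f : ℕ → X) : ℕ → X :=
  fun n => ∑ᶠ j : ℕ, Ring.multichoose β j • f (j + n)

theorem weylSum_eq_multichooseSum {α : ℝ} (hα : 0 < α) (f : ℕ → X) :
    weylSum α f = multichooseSum α f := by
  funext n
  exact finsum_congr fun j => by rw [cesK_eq_multichoose hα]

theorem multichooseSum_zero (f : ℕ → X) : multichooseSum 0 f = f := by
  funext n
  rw [multichooseSum, finsum_eq_single _ 0 fun j hj => ?_]
  · simp
  · obtain ⟨k, rfl⟩ := Nat.exists_eq_succ_of_ne_zero hj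
    simp

theorem multichooseSum_smul (β c : ℝ) (f : ℕ → X) :
    multichooseSum β (c • f) = c • multichooseSum β f := by
  funext n
  simp only [multichooseSum, Pi.smul_apply, smul_finsum, smul_comm c]

variable {f : ℕ → X} {N : ℕ}

theorem multichooseSum_eq_sum_range (β : ℝ) (hf : ∀ j ≥ N, f j = 0) {M n : ℕ} (hM : N ≤ M + n) :
    multichooseSum β f n = ∑ j ∈ range M, Ring.multichoose β j • f (j + n) := by
  refine finsum_eq_finsetSum_of_support_subset _ fun j hj => ?_
  rw [coe_range, Set.mem_Iio]
  by_contra! hjM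
  exact hj (by simp only [hf (j + n) (by omega), smul_zero])

theorem multichooseSum_apply_eq_zero (β : ℝ) (hf : ∀ j ≥ N, f j = 0) :
    ∀ n ≥ N, multichooseSum β f n = 0 := fun n hn => by
  rw [multichooseSum_eq_sum_range β hf (M := 0) (by omega), sum_range_zero]

theorem multichooseSum_multichooseSum (β γ : ℝ) (hf : ∀ j ≥ N, f j = 0) :
    multichooseSum β (multichooseSum γ f) = multichooseSum (β + γ) f := by
  funext n
  rw [multichooseSum_eq_sum_range β (multichooseSum_apply_eq_zero γ hf) (M := N) (by omega),
    multichooseSum_eq_sum_range (β + γ) hf (M := N) (by omega)]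
  have inner (j : ℕ) : Ring.multichoose β j • multichooseSum γ f (j + n) =
      ∑ i ∈ range (N - j), (Ring.multichoose β j * Ring.multichoose γ i) • f (i + (j + n)) := by
    rw [multichooseSum_eq_sum_range γ hf (M := N - j) (by omega), smul_sum]
    simp only [smul_smul]
  simp only [inner, ← sum_range_diag_flip N
    fun j i => (Ring.multichoose β j * Ring.multichoose γ i) • f (i + (j + n)),
    Ring.multichoose_add_eq_sum_range, sum_smul]
  refine sum_congr rfl fun s _ => sum_congr rfl fun j hj => ?_
  rw [show s - j + (j + n) = s + n by rw [mem_range] at hj; omega]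

theorem multichooseSum_add_one_apply (β : ℝ) (hf : ∀ j ≥ N, f j = 0) (n : ℕ) :
    multichooseSum (β + 1) f n = multichooseSum β f n + multichooseSum (β + 1) f (n + 1) := by
  rw [multichooseSum_eq_sum_range _ hf (M := N + 1) (by omega),
    multichooseSum_eq_sum_range _ hf (M := N + 1) (by omega),
    multichooseSum_eq_sum_range _ hf (M := N) (by omega), sum_range_succ', sum_range_succ']
  simp only [Ring.multichoose_succ_succ, add_smul, sum_add_distrib, Ring.multichoose_zero_right]
  simp only [show ∀ j, j + (n + 1) = j + 1 + n from fun j => by omega]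
  abel

theorem fdiff_multichooseSum_add_one (β : ℝ) (hf : ∀ j ≥ N, f j = 0) :
    fdiff (multichooseSum (β + 1) f) = -multichooseSum β f := by
  funext n
  rw [fdiff, multichooseSum_add_one_apply β hf n, Pi.neg_apply]
  abel

theorem multichooseSum_fdiff (β : ℝ) (hf : ∀ j ≥ N, f j = 0) :
    multichooseSum β (fdiff f) = fdiff (multichooseSum β f) := by
  funext n
  rw [fdiff, multichooseSum_eq_sum_range β (fdiff_apply_eq_zero hf) (M := N) (by omega),
    multichooseSum_eq_sum_range β hf (M := N) (by omega),
    multichooseSum_eq_sum_range β hf (M := N) (by omega), ← sum_sub_distrib]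
  refine sum_congr rfl fun j _ => ?_
  rw [fdiff, smul_sub, add_assoc]

theorem fdiff_iterate_multichooseSum (β : ℝ) (hf : ∀ j ≥ N, f j = 0) (m : ℕ) :
    fdiff^[m] (multichooseSum (β + m) f) = ((-1 : ℝ) ^ m) • multichooseSum β f := by
  induction m generalizing β with
  | zero => simp
  | succ m ih =>
    rw [Function.iterate_succ_apply', Nat.cast_succ, ← add_assoc, add_right_comm, ih,
      fdiff_smul, fdiff_multichooseSum_add_one β hf, pow_succ, mul_neg_one, neg_smul, smul_neg]

theorem multichooseSum_fdiff_iterate (β : ℝ) (hf : ∀ j ≥ N, f j = 0) (m : ℕ) :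
    multichooseSum β (fdiff^[m] f) = fdiff^[m] (multichooseSum β f) := by
  induction m generalizing f with
  | zero => rfl
  | succ m ih =>
    rw [Function.iterate_succ_apply, Function.iterate_succ_apply, ih (fdiff_apply_eq_zero hf),
      multichooseSum_fdiff β hf]

end multichooseSum

theorem stmt3_general {X : Type*} [NormedAddCommGroup X] [NormedSpace ℂ X]
    (f : ℕ → X) (hf : (Function.support f).Finite) (α : ℝ) (hα : 0 < α) :
    weylDiff α (weylSum α f) = f ∧ weylSum α (weylDiff α f) = f := by
  obtain ⟨N, hN⟩ : ∃ N, ∀ j ≥ N, f j = 0 := by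
    obtain ⟨B, hB⟩ := hf.bddAbove
    exact ⟨B + 1, fun j hj => Function.notMem_support.mp fun h => by have := hB h; omega⟩
  set m := ⌊α⌋₊ + 1
  have hβ : 0 < (⌊α⌋₊ : ℝ) + 1 - α := by linarith [Nat.lt_floor_add_one α]
  have hm : (⌊α⌋₊ : ℝ) + 1 - α + α = 0 + m := by push_cast [m]; ring
  have hsign : ((-1 : ℝ) ^ m) • ((-1 : ℝ) ^ m) • f = f := by
    rw [smul_smul, ← pow_add, Even.neg_one_pow ⟨m, rfl⟩, one_smul]
  simp only [weylDiff, if_neg hα.ne', weylSum_eq_multichooseSum hα, weylSum_eq_multichooseSum hβ]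
  constructor
  · rw [multichooseSum_multichooseSum _ _ hN, hm, fdiff_iterate_multichooseSum 0 hN,
      multichooseSum_zero, hsign]
  · rw [multichooseSum_smul, multichooseSum_fdiff_iterate _ (multichooseSum_apply_eq_zero _ hN),
      multichooseSum_multichooseSum _ _ hN, add_comm α, hm, fdiff_iterate_multichooseSum 0 hN,
      multichooseSum_zero, hsign]

theorem stmt3 {X : Type*} [NormedAddCommGroup X] [NormedSpace ℂ X] [CompleteSpace X]
    (f : ℕ → X) (hf : (Function.support f).Finite) (α : ℝ) (hα : 0 < α) :
    weylDiff α (weylSum α f) = f ∧ weylSum α (weylDiff α f) = f :=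
  stmt3_general f hf α hα
end

section
/- Let α > 0 and let φ : ℕ₀ → (0,∞) belong to the class ω_{α,loc} with constant c_φ. Then k^α(n) ≤ c_φ·φ(n) for all n ≥ 1, and c_φ·φ(n) ≤ (c_φ·φ(1))^n for all n ≥ 1; in particular φ grows at most exponentially. -/
/-- `φ` belongs to the class `ω_{α,loc}` with constant `c`:
`(∑_{n=0}^{j} + ∑_{n=p+1}^{j+p}) k^α(n)·φ(j+p-n) ≤ c·φ(j)·φ(p)` for all `1 ≤ j ≤ p`. -/
def omegaLoc (α : ℝ) (φ : ℕ → ℝ) (c : ℝ) : Prop :=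
  ∀ j p : ℕ, 1 ≤ j → j ≤ p →
    ((∑ n ∈ Finset.range (j + 1), cesK α n * φ (j + p - n)) +
        ∑ n ∈ Finset.Icc (p + 1) (j + p), cesK α n * φ (j + p - n)) ≤ c * (φ j * φ p)

section CesaroKernel

variable {α : ℝ}

theorem cesK_pos (hα : 0 < α) (n : ℕ) : 0 < cesK α n :=
  div_pos (Real.Gamma_pos_of_pos (by positivity))
    (mul_pos (Real.Gamma_pos_of_pos hα) (Real.Gamma_pos_of_pos (by positivity)))

theorem cesK_zero (hα : Real.Gamma α ≠ 0) : cesK α 0 = 1 := by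
  simp [cesK, div_self hα]

end CesaroKernel

namespace omegaLoc

variable {α : ℝ} {φ : ℕ → ℝ} {c : ℝ}

theorem cesK_mul_le (h : omegaLoc α φ c) (hα : 0 < α) (hφ : ∀ n, 0 < φ n)
    {j p n : ℕ} (hj : 1 ≤ j) (hjp : j ≤ p) (hn : n ≤ j) :
    cesK α n * φ (j + p - n) ≤ c * (φ j * φ p) := by
  have hterm_nonneg : ∀ m, 0 ≤ cesK α m * φ (j + p - m) :=
    fun m => (mul_pos (cesK_pos hα m) (hφ _)).le
  calc cesK α n * φ (j + p - n)
      ≤ ∑ m ∈ Finset.range (j + 1), cesK α m * φ (j + p - m) :=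
        Finset.single_le_sum (fun m _ => hterm_nonneg m) (Finset.mem_range_succ_iff.mpr hn)
    _ ≤ _ := le_add_of_nonneg_right (Finset.sum_nonneg fun m _ => hterm_nonneg m)
    _ ≤ c * (φ j * φ p) := h j p hj hjp

theorem cesK_le (h : omegaLoc α φ c) (hα : 0 < α) (hφ : ∀ n, 0 < φ n)
    {n : ℕ} (hn : 1 ≤ n) : cesK α n ≤ c * φ n := by
  have hdiag := h.cesK_mul_le hα hφ hn le_rfl le_rfl
  rw [Nat.add_sub_cancel, ← mul_assoc] at hdiag
  exact le_of_mul_le_mul_right hdiag (hφ n)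

theorem const_pos (h : omegaLoc α φ c) (hα : 0 < α) (hφ : ∀ n, 0 < φ n) : 0 < c :=
  pos_of_mul_pos_left ((cesK_pos hα 1).trans_le (h.cesK_le hα hφ le_rfl)) (hφ 1).le

theorem succ_le (h : omegaLoc α φ c) (hα : 0 < α) (hφ : ∀ n, 0 < φ n)
    {n : ℕ} (hn : 1 ≤ n) : φ (n + 1) ≤ c * (φ 1 * φ n) := by
  have hfirst := h.cesK_mul_le hα hφ le_rfl hn (Nat.zero_le 1)
  rwa [cesK_zero (Real.Gamma_pos_of_pos hα).ne', one_mul, Nat.sub_zero, Nat.add_comm] at hfirst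

theorem mul_le_pow (h : omegaLoc α φ c) (hα : 0 < α) (hφ : ∀ n, 0 < φ n)
    {n : ℕ} (hn : 1 ≤ n) : c * φ n ≤ (c * φ 1) ^ n := by
  have hc := h.const_pos hα hφ
  induction n, hn using Nat.le_induction with
  | base => rw [pow_one]
  | succ m hm ih =>
    calc c * φ (m + 1)
        ≤ c * (c * (φ 1 * φ m)) := mul_le_mul_of_nonneg_left (h.succ_le hα hφ hm) hc.le
      _ = (c * φ 1) * (c * φ m) := by ring
      _ ≤ (c * φ 1) * (c * φ 1) ^ m :=
          mul_le_mul_of_nonneg_left ih (mul_pos hc (hφ 1)).le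
      _ = (c * φ 1) ^ (m + 1) := (pow_succ' _ _).symm

end omegaLoc

theorem stmt9_general (α : ℝ) (hα : 0 < α) (φ : ℕ → ℝ) (hφ : ∀ n, 0 < φ n) (c : ℝ)
    (h : omegaLoc α φ c) :
    (∀ n : ℕ, 1 ≤ n → cesK α n ≤ c * φ n) ∧
      ∀ n : ℕ, 1 ≤ n → c * φ n ≤ (c * φ 1) ^ n :=
  ⟨fun _ hn => h.cesK_le hα hφ hn, fun _ hn => h.mul_le_pow hα hφ hn⟩

theorem stmt9 (α : ℝ) (hα : 0 < α) (φ : ℕ → ℝ) (hφ : ∀ n, 0 < φ n) (c : ℝ) (hc : 0 < c)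
    (h : omegaLoc α φ c) :
    (∀ n : ℕ, 1 ≤ n → cesK α n ≤ c * φ n) ∧
      ∀ n : ℕ, 1 ≤ n → c * φ n ≤ (c * φ 1) ^ n :=
  stmt9_general α hα φ hφ c h
end
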